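/- For every even integer m ≥ 2, the polynomial He_m(x)² has Hermite rank 2; precisely, ∫ He_m(x)² · x dγ(x) = 0 and ∫ He_m(x)² · He_2(x) dγ(x) = 2 · m² · (m−1)! ≠ 0. -/

import Mathlib

open Polynomial MeasureTheory ProbabilityTheory

/-- The `n`-th probabilists' Hermite polynomial, with real coefficients. -/
noncomputable def hermiteR (n : ℕ) : Polynomial ℝ :=
  (Polynomial.hermite n).map (Int.castRingHom ℝ)

/-- The standard Gaussian measure `N(0,1)` on `ℝ`. -/
noncomputable def stdGaussian : Measure ℝ := gaussianReal 0 1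

/-- `F` has Hermite rank `m`: `m ≥ 1` is the smallest integer `k ≥ 1` such that
`∫ F(x) He_k(x) dγ(x) ≠ 0`, where `γ` is the standard Gaussian measure. -/
def HasHermiteRank (F : Polynomial ℝ) (m : ℕ) : Prop :=
  1 ≤ m ∧ (∫ x, F.eval x * (hermiteR m).eval x ∂stdGaussian) ≠ 0 ∧
    ∀ k, 1 ≤ k → k < m → (∫ x, F.eval x * (hermiteR k).eval x ∂stdGaussian) = 0

/-!
Gaussian integration by parts, `∫ x P(x) dγ = ∫ P'(x) dγ`, together with
`He_{k+1} = X He_k - He_k'` gives `∫ He_{k+1} P dγ = ∫ He_k P' dγ`, hence the orthogonality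
`∫ He_j He_k dγ = k! δ_{jk}`. By the three-term recurrence `X He_m = He_{m+1} + m He_{m-1}`,
`∫ X He_m² dγ = ∫ (He_{m+1} + m He_{m-1}) He_m dγ = 0`, and
`∫ He_2 He_m² dγ = ∫ X (He_m²)' dγ = 2m ∫ (X He_m) He_{m-1} dγ = 2m · m (m-1)!`.
-/

open scoped NNReal

namespace ProbabilityTheory

variable {μ : ℝ} {v : ℝ≥0}

lemma integrable_pow_gaussianReal (n : ℕ) : Integrable (fun x : ℝ ↦ x ^ n) (gaussianReal μ v) :=
  (memLp_id_gaussianReal n).integrable_norm_pow'.mono' (by fun_prop)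
    (ae_of_all _ fun x ↦ by simp [norm_pow])

lemma integrable_eval_gaussianReal (P : ℝ[X]) :
    Integrable (fun x ↦ P.eval x) (gaussianReal μ v) := by
  simp_rw [eval_eq_sum_range]
  exact integrable_finsetSum _ fun n _ ↦ (integrable_pow_gaussianReal n).const_mul _

lemma integrable_gaussianReal_iff_integrable_gaussianPDFReal_mul (hv : v ≠ 0) {f : ℝ → ℝ} :
    Integrable f (gaussianReal μ v) ↔ Integrable (fun x ↦ gaussianPDFReal μ v x * f x) := by
  rw [gaussianReal_of_var_ne_zero _ hv, integrable_withDensity_iff_integrable_smul'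
    (measurable_gaussianPDF μ v) (ae_of_all _ fun _ ↦ gaussianPDF_lt_top)]
  simp [toReal_gaussianPDF]

lemma hasDerivAt_gaussianPDFReal (x : ℝ) :
    HasDerivAt (gaussianPDFReal μ v) (-((x - μ) / v) * gaussianPDFReal μ v x) x := by
  have hexp : HasDerivAt (fun y ↦ -(y - μ) ^ 2 / (2 * v)) (-((x - μ) / v)) x := by
    refine ((((hasDerivAt_id x).sub_const μ).pow 2).fun_neg.div_const (2 * (v : ℝ))).congr_deriv ?_
    push_cast [id]
    ring
  rw [gaussianPDFReal_def]
  refine (hexp.exp.const_mul (√(2 * Real.pi * v))⁻¹).congr_deriv ?_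
  ring

/-- Gaussian integration by parts (Stein's lemma). -/
theorem integral_sub_mul_gaussianReal (hv : v ≠ 0) {f f' : ℝ → ℝ}
    (hf : ∀ x, HasDerivAt f (f' x) x) (hf_int : Integrable f (gaussianReal μ v))
    (hf'_int : Integrable f' (gaussianReal μ v))
    (hxf_int : Integrable (fun x ↦ (x - μ) * f x) (gaussianReal μ v)) :
    ∫ x, (x - μ) * f x ∂gaussianReal μ v = v * ∫ x, f' x ∂gaussianReal μ v := by
  rw [integrable_gaussianReal_iff_integrable_gaussianPDFReal_mul hv] at hf_int hf'_int hxf_int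
  have hv' : (v : ℝ) ≠ 0 := by exact_mod_cast hv
  have hderiv : ∀ x, HasDerivAt (fun x ↦ gaussianPDFReal μ v x * f x)
      (gaussianPDFReal μ v x * f' x - (v : ℝ)⁻¹ * (gaussianPDFReal μ v x * ((x - μ) * f x))) x := by
    intro x
    refine ((hasDerivAt_gaussianPDFReal x).fun_mul (hf x)).congr_deriv ?_
    rw [div_eq_mul_inv]
    ring
  have h := integral_eq_zero_of_hasDerivAt_of_integrable hderiv
    (hf'_int.sub (hxf_int.const_mul _)) hf_int
  rw [integral_sub hf'_int (hxf_int.const_mul _), integral_const_mul, sub_eq_zero] at h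
  simp only [integral_gaussianReal_eq_integral_smul hv, smul_eq_mul]
  rw [h, mul_inv_cancel_left₀ hv']

end ProbabilityTheory

namespace Polynomial

theorem derivative_hermite_succ (n : ℕ) :
    derivative (hermite (n + 1)) = (n + 1) • hermite n := by
  induction n with
  | zero => simp [hermite_zero]
  | succ n ih =>
    rw [hermite_succ (n + 1), derivative_sub, derivative_mul, derivative_X, one_mul, ih,
      derivative_smul, hermite_succ n]
    simp only [mul_smul_comm]
    module

theorem X_mul_hermite_succ (n : ℕ) :
    X * hermite (n + 1) = hermite (n + 2) + (n + 1) • hermite n := by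
  rw [hermite_succ (n + 1), derivative_hermite_succ, sub_add_cancel]

end Polynomial

lemma hermiteR_zero : hermiteR 0 = 1 := by
  simp [hermiteR]

lemma hermiteR_one : hermiteR 1 = X := by
  simp [hermiteR]

lemma hermiteR_succ (n : ℕ) : hermiteR (n + 1) = X * hermiteR n - derivative (hermiteR n) := by
  simp only [hermiteR, hermite_succ, Polynomial.map_sub, Polynomial.map_mul, map_X,
    derivative_map]

lemma derivative_hermiteR_succ (n : ℕ) :
    derivative (hermiteR (n + 1)) = (n + 1) • hermiteR n := by
  unfold hermiteR
  rw [derivative_map, derivative_hermite_succ, nsmul_eq_mul, Polynomial.map_mul,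
    Polynomial.map_natCast, nsmul_eq_mul]

lemma X_mul_hermiteR_succ (n : ℕ) :
    X * hermiteR (n + 1) = hermiteR (n + 2) + (n + 1) • hermiteR n := by
  unfold hermiteR
  rw [← map_X (Int.castRingHom ℝ), ← Polynomial.map_mul, X_mul_hermite_succ, Polynomial.map_add,
    nsmul_eq_mul, Polynomial.map_mul, Polynomial.map_natCast, nsmul_eq_mul]

noncomputable def gaussianIntegral : ℝ[X] →ₗ[ℝ] ℝ where
  toFun P := ∫ x, P.eval x ∂stdGaussian
  map_add' P Q := by
    simp only [eval_add]
    exact integral_add (integrable_eval_gaussianReal P) (integrable_eval_gaussianReal Q)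
  map_smul' c P := by
    simp only [eval_smul, smul_eq_mul, RingHom.id_apply]
    exact integral_const_mul c _

lemma gaussianIntegral_apply (P : ℝ[X]) :
    gaussianIntegral P = ∫ x, P.eval x ∂stdGaussian := rfl

lemma gaussianIntegral_one : gaussianIntegral 1 = 1 := by
  simp [gaussianIntegral_apply, _root_.stdGaussian]

lemma gaussianIntegral_X_mul (P : ℝ[X]) :
    gaussianIntegral (X * P) = gaussianIntegral (derivative P) := by
  have h := integral_sub_mul_gaussianReal (μ := 0) (v := 1) one_ne_zero (fun x ↦ P.hasDerivAt x)
    (integrable_eval_gaussianReal P) (integrable_eval_gaussianReal _)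
    (by convert integrable_eval_gaussianReal (X * P) using 2; simp)
  simpa [gaussianIntegral_apply, _root_.stdGaussian, eval_mul] using h

lemma gaussianIntegral_hermiteR_succ_mul (k : ℕ) (P : ℝ[X]) :
    gaussianIntegral (hermiteR (k + 1) * P) = gaussianIntegral (hermiteR k * derivative P) := by
  have h := gaussianIntegral_X_mul (hermiteR k * P)
  rw [derivative_mul, map_add] at h
  rw [hermiteR_succ, sub_mul, map_sub, mul_assoc, h, add_sub_cancel_left]

lemma gaussianIntegral_hermiteR_mul_hermiteR (k j : ℕ) :
    gaussianIntegral (hermiteR k * hermiteR j) = if k = j then (k.factorial : ℝ) else 0 := by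
  induction k generalizing j with
  | zero =>
    cases j with
    | zero => simp [hermiteR_zero, gaussianIntegral_one]
    | succ i => rw [mul_comm, gaussianIntegral_hermiteR_succ_mul]; simp [hermiteR_zero]
  | succ k ih =>
    rw [gaussianIntegral_hermiteR_succ_mul]
    cases j with
    | zero => simp [hermiteR_zero]
    | succ i =>
      rw [derivative_hermiteR_succ, mul_smul_comm, map_nsmul, ih]
      split_ifs <;> simp_all [Nat.factorial_succ]

lemma derivative_hermiteR_succ_sq (n : ℕ) :
    derivative (hermiteR (n + 1) ^ 2) = (2 * ((n : ℝ) + 1)) • (hermiteR (n + 1) * hermiteR n) := by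
  rw [derivative_sq, derivative_hermiteR_succ, nsmul_eq_mul, smul_eq_C_mul, C_mul, C_add, C_1,
    map_natCast]
  push_cast
  ring

lemma gaussianIntegral_hermiteR_succ_sq_mul_X (n : ℕ) :
    gaussianIntegral (hermiteR (n + 1) ^ 2 * X) = 0 := by
  rw [sq, mul_comm, ← mul_assoc, X_mul_hermiteR_succ, add_mul, map_add, smul_mul_assoc, map_nsmul,
    gaussianIntegral_hermiteR_mul_hermiteR, gaussianIntegral_hermiteR_mul_hermiteR]
  simp

lemma gaussianIntegral_hermiteR_succ_sq_mul_hermiteR_two (n : ℕ) :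
    gaussianIntegral (hermiteR (n + 1) ^ 2 * hermiteR 2)
      = 2 * ((n : ℝ) + 1) ^ 2 * n.factorial :=
  calc gaussianIntegral (hermiteR (n + 1) ^ 2 * hermiteR (1 + 1))
      = gaussianIntegral (X * derivative (hermiteR (n + 1) ^ 2)) := by
        rw [mul_comm, gaussianIntegral_hermiteR_succ_mul, hermiteR_one]
    _ = 2 * (n + 1) * gaussianIntegral (X * hermiteR (n + 1) * hermiteR n) := by
        rw [derivative_hermiteR_succ_sq, mul_smul_comm, map_smul, smul_eq_mul, ← mul_assoc]
    _ = 2 * ((n : ℝ) + 1) ^ 2 * n.factorial := by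
        rw [X_mul_hermiteR_succ, add_mul, map_add, smul_mul_assoc, map_nsmul,
          gaussianIntegral_hermiteR_mul_hermiteR, gaussianIntegral_hermiteR_mul_hermiteR,
          if_neg (by omega), if_pos rfl, zero_add, nsmul_eq_mul]
        push_cast
        ring

theorem hermite_sq_rank_two_general (m : ℕ) (hm : 2 ≤ m) :
    HasHermiteRank ((hermiteR m) ^ 2) 2 ∧
    (∫ x, ((hermiteR m).eval x) ^ 2 * x ∂stdGaussian) = 0 ∧
    (∫ x, ((hermiteR m).eval x) ^ 2 * (hermiteR 2).eval x ∂stdGaussian)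
      = 2 * (m : ℝ) ^ 2 * ((m - 1).factorial : ℝ) ∧
    2 * (m : ℝ) ^ 2 * ((m - 1).factorial : ℝ) ≠ 0 := by
  obtain ⟨n, rfl⟩ : ∃ n, m = n + 1 := ⟨m - 1, by omega⟩
  have h1 := gaussianIntegral_hermiteR_succ_sq_mul_X n
  have h2 := gaussianIntegral_hermiteR_succ_sq_mul_hermiteR_two n
  simp only [gaussianIntegral_apply, eval_mul, eval_pow, eval_X] at h1 h2
  have hne : 2 * ((n : ℝ) + 1) ^ 2 * (n.factorial : ℝ) ≠ 0 := by positivity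
  rw [Nat.add_sub_cancel, Nat.cast_succ]
  refine ⟨⟨one_le_two, ?_, fun k hk1 hk2 ↦ ?_⟩, h1, h2, hne⟩
  · simpa only [eval_pow, h2] using hne
  · obtain rfl : k = 1 := by omega
    simpa only [eval_pow, hermiteR_one, eval_X] using h1

/-- For every even `m ≥ 2`, the polynomial `He_m(x)²` has Hermite rank `2`; precisely,
`∫ He_m(x)² x dγ(x) = 0` and `∫ He_m(x)² He₂(x) dγ(x) = 2 m² (m-1)! ≠ 0`. -/
theorem hermite_sq_rank_two (m : ℕ) (hm : 2 ≤ m) (hme : Even m) :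
    HasHermiteRank ((hermiteR m) ^ 2) 2 ∧
    (∫ x, ((hermiteR m).eval x) ^ 2 * x ∂stdGaussian) = 0 ∧
    (∫ x, ((hermiteR m).eval x) ^ 2 * (hermiteR 2).eval x ∂stdGaussian)
      = 2 * (m : ℝ) ^ 2 * ((m - 1).factorial : ℝ) ∧
    2 * (m : ℝ) ^ 2 * ((m - 1).factorial : ℝ) ≠ 0 :=
  hermite_sq_rank_two_general m hm
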